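/- arXiv:1505.06286 — 2 statements merged into one kernel-verified Lean document; each statement's English description precedes it below -/
import Mathlib

section
/- In the SpecialRM instance constructed from a finite simple graph G' = (V', E') with minimum degree at least 1 and price p > 0, the adoption set admits a purely combinatorial characterization: for every seed set A ⊆ V', σ_p(A) is the least subset S ⊆ V' (under inclusion) such that A ⊆ S and every vertex v all of whose neighbors in G' lie in S belongs to S. In particular, a vertex v ∉ A crosses the adoption threshold relative to a set S if and only if all neighbors of v are in S. -/
open Finset
open scoped Classical

/-- A set `S` is adoption-closed for seed set `A` at price `p`. The adoption set `σ_p(A)`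
is the least such set. -/
def AdoptClosed {V : Type*} [DecidableEq V]
    (χ : V → ℝ) (w : V → V → ℝ) (F : ℝ → ℝ) (p : ℝ) (A S : Finset V) : Prop :=
  A ⊆ S ∧ ∀ v, p ≤ χ v + F (∑ u ∈ S.erase v, w u v) → v ∈ S

/-- The weights of the SpecialRM instance constructed from a simple graph `G` at price `p`:
`w u v = p / deg v` if `{u,v}` is an edge, and `0` otherwise. -/
noncomputable def srmW {V : Type*} [Fintype V] (G : SimpleGraph V) [DecidableRel G.Adj]
    (p : ℝ) (u v : V) : ℝ :=
  if G.Adj u v then p / G.degree v else 0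

namespace SimpleGraph

variable {V : Type*} [Fintype V] (G : SimpleGraph V) [DecidableRel G.Adj]

theorem filter_adj_subset_neighborFinset (S : Finset V) (v : V) :
    {u ∈ S | G.Adj u v} ⊆ G.neighborFinset v := fun u hu ↦
  (G.mem_neighborFinset v u).2 (mem_filter.1 hu).2.symm

theorem degree_le_card_filter_adj_iff (S : Finset V) (v : V) :
    G.degree v ≤ #{u ∈ S | G.Adj u v} ↔ ∀ u, G.Adj u v → u ∈ S := by
  rw [← card_neighborFinset_eq_degree]
  constructor
  · intro hcard u huv
    have hsub := G.filter_adj_subset_neighborFinset S v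
    have hu : u ∈ G.neighborFinset v := (G.mem_neighborFinset v u).2 huv.symm
    rw [← eq_of_subset_of_card_le hsub hcard] at hu
    exact (mem_filter.1 hu).1
  · intro hS
    refine card_le_card fun u hu ↦ mem_filter.2 ⟨hS u ?_, ?_⟩ <;>
      exact ((G.mem_neighborFinset v u).1 hu).symm

theorem srmW_self (p : ℝ) (v : V) : srmW G p v v = 0 := by
  simp [srmW]

theorem sum_erase_srmW [DecidableEq V] (p : ℝ) (S : Finset V) (v : V) :
    ∑ u ∈ S.erase v, srmW G p u v = #{u ∈ S | G.Adj u v} * (p / G.degree v) := by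
  rw [sum_erase (f := (srmW G p · v)) _ (G.srmW_self p v)]
  simp only [srmW, sum_ite, sum_const_zero, add_zero, sum_const, nsmul_eq_mul]

/-- Each adopted neighbour contributes `p / deg v`, so the threshold `p` is reached exactly
when all `deg v` neighbours have adopted. -/
theorem le_sum_erase_srmW_iff [DecidableEq V] {p : ℝ} (hp : 0 < p) {v : V}
    (hv : 1 ≤ G.degree v) (S : Finset V) :
    p ≤ ∑ u ∈ S.erase v, srmW G p u v ↔ ∀ u, G.Adj u v → u ∈ S := by
  have hdeg : (0 : ℝ) < G.degree v := by exact_mod_cast hv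
  rw [G.sum_erase_srmW, ← degree_le_card_filter_adj_iff, mul_div_left_comm,
    le_mul_iff_one_le_right hp, one_le_div hdeg]
  exact_mod_cast Iff.rfl

theorem adoptClosed_srmW_iff [DecidableEq V] (hdeg : ∀ v, 1 ≤ G.degree v) {p : ℝ}
    (hp : 0 < p) (A S : Finset V) :
    AdoptClosed (fun _ ↦ (0 : ℝ)) (srmW G p) id p A S ↔
      A ⊆ S ∧ ∀ v, (∀ u, G.Adj u v → u ∈ S) → v ∈ S := by
  simp only [AdoptClosed, zero_add, id_eq, G.le_sum_erase_srmW_iff hp (hdeg _)]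

end SimpleGraph

/-- In the SpecialRM instance (χ ≡ 0, F = id), the adoption set has a
purely combinatorial characterization: σ_p(A) is the least set containing A and closed
under adding any vertex all of whose neighbors are already in the set; in particular, a
vertex crosses the adoption threshold relative to S iff all its neighbors lie in S. -/
theorem specialRM_adoption_combinatorial
    {V : Type*} [Fintype V] [DecidableEq V]
    (G : SimpleGraph V) [DecidableRel G.Adj]
    (hdeg : ∀ v, 1 ≤ G.degree v) (p : ℝ) (hp : 0 < p) :
    (∀ A σ : Finset V,
      IsLeast {S : Finset V | AdoptClosed (fun _ => (0 : ℝ)) (srmW G p) id p A S} σ ↔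
      IsLeast {S : Finset V | A ⊆ S ∧ ∀ v, (∀ u, G.Adj u v → u ∈ S) → v ∈ S} σ) ∧
    (∀ (S : Finset V) (v : V),
      p ≤ (fun _ => (0 : ℝ)) v + id (∑ u ∈ S.erase v, srmW G p u v) ↔
      ∀ u, G.Adj u v → u ∈ S) := by
  refine ⟨fun A σ ↦ ?_, fun S v ↦ ?_⟩
  · simp only [G.adoptClosed_srmW_iff hdeg hp]
  · rw [zero_add, id_eq]
    exact G.le_sum_erase_srmW_iff hp (hdeg v) S
end

section
/- In the SpecialRM instance constructed from a finite simple graph G' = (V', E') with minimum degree at least 1 and price p > 0, if {u,v} is an edge of G' and the seed set S ⊆ V' contains neither u nor v, then u ∉ σ_p(S) and v ∉ σ_p(S); in particular σ_p(S) ≠ V'. -/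
/-!
Deleting `u` and `v` from the adoption set leaves a set that is still adoption-closed: each of
them lacks the other as a neighbour there, so its incoming weight is at most
`(deg - 1) * p / deg < p`. Minimality of the adoption set then rules out both.
-/

open Finset
open scoped Classical

theorem AdoptClosed.sdiff {V : Type*} [DecidableEq V] {χ : V → ℝ} {w : V → V → ℝ}
    {F : ℝ → ℝ} {p : ℝ} {A S B : Finset V} (hS : AdoptClosed χ w F p A S)
    (hw : ∀ u v, 0 ≤ w u v) (hF : Monotone F) (hAB : Disjoint A B)
    (hB : ∀ b ∈ B, χ b + F (∑ u ∈ (S \ B).erase b, w u b) < p) :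
    AdoptClosed χ w F p A (S \ B) := by
  refine ⟨subset_sdiff.2 ⟨hS.1, hAB⟩, fun v hv => mem_sdiff.2 ⟨hS.2 v ?_, fun hvB => ?_⟩⟩
  · refine hv.trans (add_le_add_right (hF (sum_le_sum_of_subset_of_nonneg ?_ ?_)) _)
    · exact erase_subset_erase v sdiff_subset
    · exact fun u _ _ => hw u v
  · exact (hB v hvB).not_ge hv

section SpecialRM

variable {V : Type*} [Fintype V] (G : SimpleGraph V) [DecidableRel G.Adj] {p : ℝ}

theorem srmW_nonneg (hp : 0 ≤ p) (u v : V) : 0 ≤ srmW G p u v := by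
  unfold srmW
  split_ifs
  exacts [div_nonneg hp (Nat.cast_nonneg _), le_rfl]

theorem sum_srmW_eq_of_degree_ne_zero {x : V} (hx : G.degree x ≠ 0) :
    ∑ y, srmW G p y x = p := by
  simp only [srmW]
  rw [sum_ite, sum_const_zero, add_zero, sum_const, nsmul_eq_mul]
  simp_rw [G.adj_comm _ x, ← G.neighborFinset_eq_filter, G.card_neighborFinset_eq_degree]
  field_simp

theorem sum_srmW_lt [DecidableEq V] (hp : 0 < p) {a x : V} (hax : G.Adj a x) {A : Finset V}
    (ha : a ∉ A) : ∑ y ∈ A, srmW G p y x < p := by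
  have hx : G.degree x ≠ 0 := ((G.degree_pos_iff_exists_adj x).2 ⟨a, hax.symm⟩).ne'
  calc ∑ y ∈ A, srmW G p y x ≤ ∑ y ∈ univ.erase a, srmW G p y x :=
        sum_le_sum_of_subset_of_nonneg (fun y hy => mem_erase.2 ⟨ne_of_mem_of_not_mem hy ha,
          mem_univ y⟩) (fun y _ _ => srmW_nonneg G hp.le y x)
    _ = p - p / G.degree x := by
        rw [sum_erase_eq_sub (mem_univ a), sum_srmW_eq_of_degree_ne_zero G hx, srmW, if_pos hax]
    _ < p := sub_lt_self p (by positivity)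

end SpecialRM

theorem specialRM_uncovered_edge_not_adopted_general
    {V : Type*} [Fintype V] [DecidableEq V]
    (G : SimpleGraph V) [DecidableRel G.Adj]
    (p : ℝ) (hp : 0 < p)
    (u v : V) (huv : G.Adj u v)
    (S : Finset V) (hu : u ∉ S) (hv : v ∉ S) (σ : Finset V)
    (hσ : IsLeast {T : Finset V | AdoptClosed (fun _ => (0 : ℝ)) (srmW G p) id p S T} σ) :
    u ∉ σ ∧ v ∉ σ ∧ σ ≠ Finset.univ := by
  have hclosed : AdoptClosed (fun _ => (0 : ℝ)) (srmW G p) id p S (σ \ {u, v}) := by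
    refine hσ.1.sdiff (srmW_nonneg G hp.le) monotone_id (by simp [hu, hv]) fun b hb => ?_
    rw [zero_add, id]
    rcases mem_insert.1 hb with rfl | hb
    · exact sum_srmW_lt G hp huv.symm (by simp)
    · rw [mem_singleton.1 hb]
      exact sum_srmW_lt G hp huv (by simp)
  have hdisj : Disjoint σ {u, v} :=
    sdiff_eq_self_iff_disjoint.1 ((hσ.2 hclosed).antisymm' sdiff_subset)
  have hu' : u ∉ σ := disjoint_right.1 hdisj (by simp)
  exact ⟨hu', disjoint_right.1 hdisj (by simp), fun h => hu' (h ▸ mem_univ u)⟩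

/-- In the SpecialRM instance, if {u,v} is an edge and the seed set S
contains neither u nor v, then neither u nor v adopts; in particular σ_p(S) ≠ V. -/
theorem specialRM_uncovered_edge_not_adopted
    {V : Type*} [Fintype V] [DecidableEq V]
    (G : SimpleGraph V) [DecidableRel G.Adj]
    (hdeg : ∀ v, 1 ≤ G.degree v) (p : ℝ) (hp : 0 < p)
    (u v : V) (huv : G.Adj u v)
    (S : Finset V) (hu : u ∉ S) (hv : v ∉ S) (σ : Finset V)
    (hσ : IsLeast {T : Finset V | AdoptClosed (fun _ => (0 : ℝ)) (srmW G p) id p S T} σ) :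
    u ∉ σ ∧ v ∉ σ ∧ σ ≠ Finset.univ :=
  specialRM_uncovered_edge_not_adopted_general G p hp u v huv S hu hv σ hσ
end
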